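/- Let ŵ be any minimizer over W of the truncated empirical risk R̂_{ψ∘ℓ1}. Then for every ε > 0 and every 0 < δ < 1, with probability at least 1 − δ over the i.i.d. sample, R_{ℓ1}(ŵ) ≤ R̂_{ψ∘ℓ1}(ŵ) + 2ε·E[‖x‖] + α·sup_{w∈W} R_{ℓ2}(w) + α·ε²·E[‖x‖²] + (1/(nα))·log(N(W,ε)/δ). -/

import Mathlib

open MeasureTheory Real

/-- The ℓ1-risk `R_{ℓ1}(w) = E_{(x,y)∼P}[|y − ⟨x,w⟩|]`. -/
noncomputable def l1Risk {H : Type*} [NormedAddCommGroup H] [InnerProductSpace ℝ H]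
    [MeasurableSpace H] (P : Measure (H × ℝ)) (w : H) : ℝ :=
  ∫ z, |z.2 - (inner ℝ z.1 w : ℝ)| ∂P

/-- The ℓ2-risk `R_{ℓ2}(w) = E_{(x,y)∼P}[(y − ⟨x,w⟩)²]`. -/
noncomputable def l2Risk {H : Type*} [NormedAddCommGroup H] [InnerProductSpace ℝ H]
    [MeasurableSpace H] (P : Measure (H × ℝ)) (w : H) : ℝ :=
  ∫ z, (z.2 - (inner ℝ z.1 w : ℝ)) ^ 2 ∂P

/-- The truncated empirical risk `R̂_{ψ∘ℓ1}(w) = (1/(nα)) Σ_i ψ(α|y_i − ⟨x_i,w⟩|)`. -/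
noncomputable def truncEmpRisk {H : Type*} [NormedAddCommGroup H] [InnerProductSpace ℝ H]
    (ψ : ℝ → ℝ) (α : ℝ) (n : ℕ) (ω : Fin n → H × ℝ) (w : H) : ℝ :=
  (1 / (n * α)) * ∑ i, ψ (α * |(ω i).2 - (inner ℝ (ω i).1 w : ℝ)|)

/-- The covering number `N(W, ε)`: the minimal cardinality of a finite ε-net of `W`
consisting of points of `W`. -/
noncomputable def coveringNumber {H : Type*} [NormedAddCommGroup H] (W : Set H) (ε : ℝ) : ℕ :=
  sInf {k | ∃ N : Finset H, ↑N ⊆ W ∧ N.card = k ∧ ∀ w ∈ W, ∃ v ∈ N, ‖w - v‖ ≤ ε}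

/-! For a point `v` of a minimal `ε`-net of `W`, the lower bound on `ψ` gives
`exp (-ψ u) ≤ 1 - u + u² / 2`; applied to `u = α (|y - ⟪x, v⟫| - ε ‖x‖)` together with
`(a - b)² ≤ 2 a² + 2 b²`, this bounds the one-sample moment `E exp (-ψ u)` by `exp (-θ_v)`, where
`θ_v = lowerTailExponent P α ε v`, and Chernoff's bound makes the empirical sum `∑ ψ u` fall below
`n θ_v - log (N / δ)` with probability at most `δ / N`. By a union bound these lower bounds hold at
all `N` net points at once with probability at least `1 - δ`. On that event, any `w ∈ W` lies within
`ε` of a net point `v`, and since `|y - ⟪x, w⟫|` moves by at most `ε ‖x‖` when `w` is replaced by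
`v`, both the truncated empirical risk and the `ℓ1`-risk at `w` compare with the quantities
controlled at `v`. -/

open scoped ENNReal

lemma exp_neg_le_of_neg_log_le {ψ : ℝ → ℝ} (hψ : ∀ x : ℝ, -Real.log (1 - x + x ^ 2 / 2) ≤ ψ x)
    (x : ℝ) : exp (-ψ x) ≤ 1 - x + x ^ 2 / 2 := by
  have hpos : 0 < 1 - x + x ^ 2 / 2 := by nlinarith [sq_nonneg (x - 1)]
  calc exp (-ψ x) ≤ exp (Real.log (1 - x + x ^ 2 / 2)) := exp_le_exp.mpr (by linarith [hψ x])
    _ = 1 - x + x ^ 2 / 2 := exp_log hpos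

lemma exp_neg_mul_sub_le {ψ : ℝ → ℝ} (hψ : ∀ x : ℝ, -Real.log (1 - x + x ^ 2 / 2) ≤ ψ x)
    (α a b : ℝ) :
    exp (-ψ (α * (a - b))) ≤ 1 - α * a + α * b + α ^ 2 * a ^ 2 + α ^ 2 * b ^ 2 := by
  refine (exp_neg_le_of_neg_log_le hψ _).trans ?_
  nlinarith [sq_nonneg (α * (a + b))]

lemma lintegral_fintype_prod_eq_pow {Z ι : Type*} [MeasurableSpace Z] [Fintype ι]
    (P : Measure Z) [IsProbabilityMeasure P] {g : Z → ℝ≥0∞} (hg : Measurable g) :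
    ∫⁻ ω : ι → Z, ∏ i, g (ω i) ∂Measure.pi (fun _ => P) = (∫⁻ z, g z ∂P) ^ Fintype.card ι := by
  rw [ProbabilityTheory.lintegral_prod_eq_prod_lintegral_of_indepFun _ _
      (ProbabilityTheory.iIndepFun_pi (X := fun _ => g) fun _ => hg.aemeasurable)
      fun i => hg.comp (measurable_pi_apply i)]
  simp_rw [fun i => (measurePreserving_eval (fun _ : ι => P) i).lintegral_comp hg]
  rw [Finset.prod_const, Finset.card_univ]

theorem measure_sum_lt_le_exp_neg {Z ι : Type*} [MeasurableSpace Z] [Fintype ι]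
    (P : Measure Z) [IsProbabilityMeasure P] {f : Z → ℝ} (hf : Measurable f) {θ : ℝ}
    (hθ : ∫⁻ z, ENNReal.ofReal (exp (-f z)) ∂P ≤ ENNReal.ofReal (exp (-θ))) (c : ℝ) :
    Measure.pi (fun _ : ι => P) {ω | ∑ i, f (ω i) < Fintype.card ι * θ - c}
      ≤ ENNReal.ofReal (exp (-c)) := by
  set t : ℝ := Fintype.card ι * θ
  have hg : Measurable fun z => ENNReal.ofReal (exp (-f z)) :=
    ENNReal.measurable_ofReal.comp (measurable_exp.comp hf.neg)
  have hprod : ∀ ω : ι → Z, ENNReal.ofReal (exp (-∑ i, f (ω i)))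
      = ∏ i, ENNReal.ofReal (exp (-f (ω i))) := fun ω => by
    rw [← ENNReal.ofReal_prod_of_nonneg fun i _ => (exp_pos _).le, ← exp_sum,
      Finset.sum_neg_distrib]
  have hmgf : ∫⁻ ω : ι → Z, ENNReal.ofReal (exp (-∑ i, f (ω i))) ∂Measure.pi (fun _ => P)
      ≤ ENNReal.ofReal (exp (-t)) := by
    simp_rw [hprod, lintegral_fintype_prod_eq_pow P hg]
    calc _ ≤ ENNReal.ofReal (exp (-θ)) ^ Fintype.card ι := pow_le_pow_left₀ zero_le hθ _
      _ = ENNReal.ofReal (exp (-t)) := by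
        rw [← ENNReal.ofReal_pow (exp_pos _).le, ← exp_nat_mul, mul_neg]
  calc Measure.pi (fun _ : ι => P) {ω | ∑ i, f (ω i) < t - c}
      ≤ Measure.pi (fun _ : ι => P)
          {ω | ENNReal.ofReal (exp (c - t)) ≤ ENNReal.ofReal (exp (-∑ i, f (ω i)))} :=
        measure_mono fun ω (hω : ∑ i, f (ω i) < t - c) =>
          ENNReal.ofReal_le_ofReal (exp_le_exp.mpr (by linarith))
    _ ≤ (∫⁻ ω, ENNReal.ofReal (exp (-∑ i, f (ω i))) ∂Measure.pi (fun _ => P))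
          / ENNReal.ofReal (exp (c - t)) :=
        meas_ge_le_lintegral_div
          (ENNReal.measurable_ofReal.comp (measurable_exp.comp
            (Finset.measurable_sum _ fun i _ => hf.comp (measurable_pi_apply i)).neg)).aemeasurable
          (by simpa using exp_pos _) ENNReal.ofReal_ne_top
    _ ≤ ENNReal.ofReal (exp (-t)) / ENNReal.ofReal (exp (c - t)) := by gcongr
    _ = ENNReal.ofReal (exp (-c)) := by
      rw [← ENNReal.ofReal_div_of_pos (exp_pos _), ← exp_sub]
      ring_nf

lemma lintegral_exp_neg_mul_sub_le {Z : Type*} [MeasurableSpace Z] (P : Measure Z)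
    [IsProbabilityMeasure P] {ψ : ℝ → ℝ}
    (hψ : ∀ x : ℝ, -Real.log (1 - x + x ^ 2 / 2) ≤ ψ x) (α : ℝ) {a b : Z → ℝ}
    (ha : Integrable a P) (hb : Integrable b P)
    (ha2 : Integrable (fun z => a z ^ 2) P) (hb2 : Integrable (fun z => b z ^ 2) P) :
    ∫⁻ z, ENNReal.ofReal (exp (-ψ (α * (a z - b z)))) ∂P
      ≤ ENNReal.ofReal (exp (-(α * ∫ z, a z ∂P - α * ∫ z, b z ∂P
          - α ^ 2 * ∫ z, a z ^ 2 ∂P - α ^ 2 * ∫ z, b z ^ 2 ∂P))) := by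
  set θ : ℝ := α * ∫ z, a z ∂P - α * ∫ z, b z ∂P
    - α ^ 2 * ∫ z, a z ^ 2 ∂P - α ^ 2 * ∫ z, b z ^ 2 ∂P
  set q : Z → ℝ := fun z => 1 - α * a z + α * b z + α ^ 2 * a z ^ 2 + α ^ 2 * b z ^ 2
  have hq : ∀ z, exp (-ψ (α * (a z - b z))) ≤ q z := fun z => exp_neg_mul_sub_le hψ α _ _
  have hqint : Integrable q P :=
    ((((integrable_const 1).sub (ha.const_mul α)).add (hb.const_mul α)).add
      (ha2.const_mul _)).add (hb2.const_mul _)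
  have hqval : ∫ z, q z ∂P = 1 - θ := by
    simp only [q]
    rw [integral_add _ (hb2.const_mul _), integral_add _ (ha2.const_mul _),
      integral_add _ (hb.const_mul α), integral_sub (integrable_const 1) (ha.const_mul α)]
    · simp only [integral_const, integral_const_mul, probReal_univ, smul_eq_mul, one_mul]
      ring
    all_goals fun_prop
  calc ∫⁻ z, ENNReal.ofReal (exp (-ψ (α * (a z - b z)))) ∂P
      ≤ ∫⁻ z, ENNReal.ofReal (q z) ∂P := lintegral_mono fun z => ENNReal.ofReal_le_ofReal (hq z)
    _ = ENNReal.ofReal (∫ z, q z ∂P) := (ofReal_integral_eq_lintegral_ofReal hqint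
          (Filter.Eventually.of_forall fun z => (exp_pos _).le.trans (hq z))).symm
    _ ≤ ENNReal.ofReal (exp (-θ)) :=
        ENNReal.ofReal_le_ofReal (by linarith [add_one_le_exp (-θ)])

lemma one_sub_card_mul_le_measure_biInter {Ω ι : Type*} [MeasurableSpace Ω] (μ : Measure Ω)
    [IsProbabilityMeasure μ] (s : Finset ι) {A : ι → Set Ω} {p : ℝ≥0∞}
    (hA : ∀ i ∈ s, μ (A i)ᶜ ≤ p) : 1 - s.card * p ≤ μ (⋂ i ∈ s, A i) := by
  rw [tsub_le_iff_right]
  calc (1 : ℝ≥0∞) = μ ((⋂ i ∈ s, A i) ∪ (⋃ i ∈ s, (A i)ᶜ)) := by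
        rw [← Set.compl_iInter₂, Set.union_compl_self, measure_univ]
    _ ≤ μ (⋂ i ∈ s, A i) + ∑ i ∈ s, μ (A i)ᶜ :=
        (measure_union_le _ _).trans (add_le_add_right (measure_biUnion_finset_le s _) _)
    _ ≤ μ (⋂ i ∈ s, A i) + s.card * p := by
        grw [Finset.sum_le_sum hA, Finset.sum_const, nsmul_eq_mul]

section Regression

variable {H : Type*} [NormedAddCommGroup H]

lemma exists_finset_card_eq_coveringNumber {W : Set H} {ε : ℝ}
    (h : ∃ N : Finset H, ↑N ⊆ W ∧ ∀ w ∈ W, ∃ v ∈ N, ‖w - v‖ ≤ ε) :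
    ∃ N : Finset H, ↑N ⊆ W ∧ N.card = coveringNumber W ε ∧ ∀ w ∈ W, ∃ v ∈ N, ‖w - v‖ ≤ ε := by
  obtain ⟨N, hNW, hN⟩ := h
  exact Nat.sInf_mem
    (s := {k | ∃ N : Finset H, ↑N ⊆ W ∧ N.card = k ∧ ∀ w ∈ W, ∃ v ∈ N, ‖w - v‖ ≤ ε})
    ⟨N.card, N, hNW, rfl, hN⟩

variable [InnerProductSpace ℝ H]

lemma abs_abs_sub_inner_sub_abs_sub_inner_le (x w v : H) (y : ℝ) :
    |(|y - inner ℝ x w| - |y - inner ℝ x v|)| ≤ ‖x‖ * ‖w - v‖ :=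
  calc |(|y - inner ℝ x w| - |y - inner ℝ x v|)| ≤ |(y - inner ℝ x w) - (y - inner ℝ x v)| :=
        abs_abs_sub_abs_le_abs_sub _ _
    _ = |inner ℝ x (w - v)| := by rw [inner_sub_right, abs_sub_comm]; ring_nf
    _ ≤ ‖x‖ * ‖w - v‖ := abs_real_inner_le_norm _ _

variable [MeasurableSpace H]

noncomputable def lowerTailExponent (P : Measure (H × ℝ)) (α ε : ℝ) (v : H) : ℝ :=
  α * l1Risk P v - α * ε * ∫ z, ‖z.1‖ ∂P
    - α ^ 2 * l2Risk P v - α ^ 2 * ε ^ 2 * ∫ z, ‖z.1‖ ^ 2 ∂P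

lemma measure_sum_psi_lt_le [BorelSpace H] (P : Measure (H × ℝ)) [IsProbabilityMeasure P]
    {ψ : ℝ → ℝ} (hψmono : Monotone ψ) (hψlb : ∀ x : ℝ, -Real.log (1 - x + x ^ 2 / 2) ≤ ψ x)
    (n : ℕ) (α ε : ℝ) (v : H)
    (hx : Integrable (fun z : H × ℝ => ‖z.1‖) P)
    (hx2 : Integrable (fun z : H × ℝ => ‖z.1‖ ^ 2) P)
    (hv : Integrable (fun z : H × ℝ => |z.2 - (inner ℝ z.1 v : ℝ)|) P)
    (hv2 : Integrable (fun z : H × ℝ => (z.2 - (inner ℝ z.1 v : ℝ)) ^ 2) P) (c : ℝ) :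
    Measure.pi (fun _ : Fin n => P)
      {ω | ∑ i, ψ (α * (|(ω i).2 - (inner ℝ (ω i).1 v : ℝ)| - ε * ‖(ω i).1‖))
        < n * lowerTailExponent P α ε v - c} ≤ ENNReal.ofReal (exp (-c)) := by
  have hmeas : Measurable fun z : H × ℝ => ψ (α * (|z.2 - (inner ℝ z.1 v : ℝ)| - ε * ‖z.1‖)) :=
    hψmono.measurable.comp (by fun_prop)
  have hmgf : ∫⁻ z, ENNReal.ofReal (exp (-ψ (α * (|z.2 - (inner ℝ z.1 v : ℝ)| - ε * ‖z.1‖)))) ∂P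
      ≤ ENNReal.ofReal (exp (-lowerTailExponent P α ε v)) := by
    convert lintegral_exp_neg_mul_sub_le P hψlb α hv (hx.const_mul ε)
      (by simpa only [sq_abs] using hv2) (by simpa only [mul_pow] using hx2.const_mul (ε ^ 2))
      using 4
    simp only [lowerTailExponent, l1Risk, l2Risk, sq_abs, mul_pow, integral_const_mul]
    ring
  simpa only [Fintype.card_fin] using measure_sum_lt_le_exp_neg (ι := Fin n) P hmeas hmgf c

lemma l1Risk_le_of_le_sum_psi {P : Measure (H × ℝ)} {ψ : ℝ → ℝ} (hψmono : Monotone ψ)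
    {n : ℕ} (hn : 0 < n) {α : ℝ} (hα : 0 < α) {ε S L : ℝ} {w v : H} (ω : Fin n → H × ℝ)
    (hx : Integrable (fun z : H × ℝ => ‖z.1‖) P)
    (hw : Integrable (fun z : H × ℝ => |z.2 - (inner ℝ z.1 w : ℝ)|) P)
    (hv : Integrable (fun z : H × ℝ => |z.2 - (inner ℝ z.1 v : ℝ)|) P)
    (hwv : ‖w - v‖ ≤ ε) (hS : l2Risk P v ≤ S)
    (hgood : n * lowerTailExponent P α ε v - L
      ≤ ∑ i, ψ (α * (|(ω i).2 - (inner ℝ (ω i).1 v : ℝ)| - ε * ‖(ω i).1‖))) :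
    l1Risk P w ≤ truncEmpRisk ψ α n ω w + 2 * ε * (∫ z, ‖z.1‖ ∂P) + α * S
      + α * ε ^ 2 * (∫ z, ‖z.1‖ ^ 2 ∂P) + 1 / (n * α) * L := by
  have hloss : ∀ z : H × ℝ, |z.2 - (inner ℝ z.1 w : ℝ)| ≤ |z.2 - (inner ℝ z.1 v : ℝ)| + ε * ‖z.1‖
      ∧ |z.2 - (inner ℝ z.1 v : ℝ)| - ε * ‖z.1‖ ≤ |z.2 - (inner ℝ z.1 w : ℝ)| := fun z => by
    have h := (abs_abs_sub_inner_sub_abs_sub_inner_le z.1 w v z.2).trans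
      (mul_le_mul_of_nonneg_left hwv (norm_nonneg _))
    constructor <;> linarith [abs_le.mp h]
  have hrisk : l1Risk P w ≤ l1Risk P v + ε * ∫ z, ‖z.1‖ ∂P := by
    rw [l1Risk, l1Risk, ← integral_const_mul, ← integral_add hv (hx.const_mul ε)]
    exact integral_mono hw (hv.add (hx.const_mul ε)) fun z => (hloss z).1
  have hemp : ∑ i, ψ (α * (|(ω i).2 - (inner ℝ (ω i).1 v : ℝ)| - ε * ‖(ω i).1‖))
      ≤ n * α * truncEmpRisk ψ α n ω w := by
    have hnα : (n : ℝ) * α ≠ 0 := by positivity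
    rw [truncEmpRisk, ← mul_assoc, mul_one_div_cancel hnα, one_mul]
    exact Finset.sum_le_sum fun i _ => hψmono (mul_le_mul_of_nonneg_left (hloss (ω i)).2 hα.le)
  have hnα : (0 : ℝ) < n * α := by positivity
  rw [one_div_mul_eq_div, ← sub_le_iff_le_add', le_div_iff₀ hnα]
  simp only [lowerTailExponent] at hgood
  nlinarith [mul_le_mul_of_nonneg_left hS (by positivity : (0 : ℝ) ≤ n * α ^ 2),
    mul_le_mul_of_nonneg_left hrisk hnα.le]

end Regression

theorem l1_risk_lower_bound_minimizer_general
    {H : Type*} [NormedAddCommGroup H] [InnerProductSpace ℝ H]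
    [MeasurableSpace H] [BorelSpace H]
    (P : Measure (H × ℝ)) [IsProbabilityMeasure P]
    (W : Set H) (ψ : ℝ → ℝ)
    (hψmono : Monotone ψ)
    (hψlb : ∀ x : ℝ, -Real.log (1 - x + x ^ 2 / 2) ≤ ψ x)
    (n : ℕ) (hn : 0 < n) (α : ℝ) (hα : 0 < α)
    -- (A1): W is totally bounded: for every ε > 0 there is a finite ε-net of W
    (hA1 : ∀ ε' > (0 : ℝ), ∃ N : Finset H, ↑N ⊆ W ∧ ∀ w ∈ W, ∃ v ∈ N, ‖w - v‖ ≤ ε')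
    -- (A2): E‖x‖² < ∞ (and hence E‖x‖ < ∞)
    (hxInt : Integrable (fun z : H × ℝ => ‖z.1‖) P)
    (hA2 : Integrable (fun z : H × ℝ => ‖z.1‖ ^ 2) P)
    -- risks are well defined on W
    (hInt1 : ∀ w ∈ W, Integrable (fun z : H × ℝ => |z.2 - (inner ℝ z.1 w : ℝ)|) P)
    (hInt2 : ∀ w ∈ W, Integrable (fun z : H × ℝ => (z.2 - (inner ℝ z.1 w : ℝ)) ^ 2) P)
    -- (A3): sup_{w ∈ W} R_{ℓ2}(w) < ∞
    (hA3 : BddAbove (l2Risk P '' W))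
    -- ŵ : any minimizer of the truncated empirical risk over W
    (what : (Fin n → H × ℝ) → H)
    (hwhatW : ∀ ω, what ω ∈ W)
    (ε δ : ℝ) (hε : 0 < ε) (hδ : 0 < δ) :
    ENNReal.ofReal (1 - δ) ≤
      Measure.pi (fun _ : Fin n => P)
        {ω | l1Risk P (what ω) ≤ truncEmpRisk ψ α n ω (what ω)
          + 2 * ε * (∫ z, ‖z.1‖ ∂P) + α * sSup (l2Risk P '' W)
          + α * ε ^ 2 * (∫ z, ‖z.1‖ ^ 2 ∂P)
          + 1 / (n * α) * Real.log ((coveringNumber W ε : ℝ) / δ)} := by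
  obtain ⟨N, hNW, hNcard, hNnet⟩ := exists_finset_card_eq_coveringNumber (hA1 ε hε)
  set K := coveringNumber W ε
  have hK : (0 : ℝ) < K := by
    obtain ⟨v, hv, -⟩ := hNnet _ (hwhatW fun _ => 0)
    exact_mod_cast hNcard ▸ Finset.card_pos.mpr ⟨v, hv⟩
  set L := Real.log (K / δ)
  set good : H → Set (Fin n → H × ℝ) := fun v => {ω | n * lowerTailExponent P α ε v - L
    ≤ ∑ i, ψ (α * (|(ω i).2 - (inner ℝ (ω i).1 v : ℝ)| - ε * ‖(ω i).1‖))}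
  have hbad : ∀ v ∈ N, Measure.pi (fun _ : Fin n => P) (good v)ᶜ ≤ ENNReal.ofReal (δ / K) :=
    fun v hv => by
      have h := measure_sum_psi_lt_le P hψmono hψlb n α ε v hxInt hA2
        (hInt1 v (hNW hv)) (hInt2 v (hNW hv)) L
      rw [exp_neg, exp_log (div_pos hK hδ), inv_div] at h
      simpa only [good, Set.compl_ofPred, not_le] using h
  calc ENNReal.ofReal (1 - δ) = 1 - N.card * ENNReal.ofReal (δ / K) := by
        rw [hNcard, ← ENNReal.ofReal_natCast, ← ENNReal.ofReal_mul (Nat.cast_nonneg _),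
          mul_div_cancel₀ _ hK.ne', ENNReal.ofReal_sub _ hδ.le, ENNReal.ofReal_one]
    _ ≤ Measure.pi (fun _ : Fin n => P) (⋂ v ∈ N, good v) :=
        one_sub_card_mul_le_measure_biInter _ N hbad
    _ ≤ _ := measure_mono fun ω hω => by
        obtain ⟨v, hvN, hwv⟩ := hNnet _ (hwhatW ω)
        exact l1Risk_le_of_le_sum_psi hψmono hn hα ω hxInt (hInt1 _ (hwhatW ω))
          (hInt1 v (hNW hvN)) hwv (le_csSup hA3 ⟨v, hNW hvN, rfl⟩) (Set.mem_iInter₂.mp hω v hvN)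

/-- Lemma 2 of the paper: with probability at least `1 − δ`,
`R_{ℓ1}(ŵ) ≤ R̂_{ψ∘ℓ1}(ŵ) + 2ε E‖x‖ + α sup_{w∈W} R_{ℓ2}(w) + αε² E‖x‖²
  + (1/(nα)) log(N(W,ε)/δ)`. -/
theorem l1_risk_lower_bound_minimizer
    {H : Type*} [NormedAddCommGroup H] [InnerProductSpace ℝ H] [CompleteSpace H]
    [MeasurableSpace H] [BorelSpace H]
    (P : Measure (H × ℝ)) [IsProbabilityMeasure P]
    (W : Set H) (ψ : ℝ → ℝ)
    (hψmono : Monotone ψ)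
    (hψlb : ∀ x : ℝ, -Real.log (1 - x + x ^ 2 / 2) ≤ ψ x)
    (hψub : ∀ x : ℝ, ψ x ≤ Real.log (1 + x + x ^ 2 / 2))
    (n : ℕ) (hn : 0 < n) (α : ℝ) (hα : 0 < α)
    -- (A1): W is totally bounded: for every ε > 0 there is a finite ε-net of W
    (hA1 : ∀ ε' > (0 : ℝ), ∃ N : Finset H, ↑N ⊆ W ∧ ∀ w ∈ W, ∃ v ∈ N, ‖w - v‖ ≤ ε')
    -- (A2): E‖x‖² < ∞ (and hence E‖x‖ < ∞)
    (hxInt : Integrable (fun z : H × ℝ => ‖z.1‖) P)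
    (hA2 : Integrable (fun z : H × ℝ => ‖z.1‖ ^ 2) P)
    -- risks are well defined on W
    (hInt1 : ∀ w ∈ W, Integrable (fun z : H × ℝ => |z.2 - (inner ℝ z.1 w : ℝ)|) P)
    (hInt2 : ∀ w ∈ W, Integrable (fun z : H × ℝ => (z.2 - (inner ℝ z.1 w : ℝ)) ^ 2) P)
    -- (A3): sup_{w ∈ W} R_{ℓ2}(w) < ∞
    (hA3 : BddAbove (l2Risk P '' W))
    -- ŵ : any minimizer of the truncated empirical risk over W
    (what : (Fin n → H × ℝ) → H)
    (hwhatW : ∀ ω, what ω ∈ W)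
    (hwhatMin : ∀ ω, ∀ w ∈ W, truncEmpRisk ψ α n ω (what ω) ≤ truncEmpRisk ψ α n ω w)
    (ε δ : ℝ) (hε : 0 < ε) (hδ : 0 < δ) (hδ' : δ < 1) :
    ENNReal.ofReal (1 - δ) ≤
      Measure.pi (fun _ : Fin n => P)
        {ω | l1Risk P (what ω) ≤ truncEmpRisk ψ α n ω (what ω)
          + 2 * ε * (∫ z, ‖z.1‖ ∂P) + α * sSup (l2Risk P '' W)
          + α * ε ^ 2 * (∫ z, ‖z.1‖ ^ 2 ∂P)
          + 1 / (n * α) * Real.log ((coveringNumber W ε : ℝ) / δ)} :=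
  l1_risk_lower_bound_minimizer_general P W ψ hψmono hψlb n hn α hα hA1 hxInt hA2 hInt1 hInt2 hA3
    what hwhatW ε δ hε hδ
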